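/- Let I_1 = [P_1^ℓ P_1^r, Q_1] be a pointed Tamari interval (a Tamari interval whose lower path carries a distinguished contact, splitting it into the Dyck paths P_1^ℓ and P_1^r) and let I_2 = [P_2, Q_2] be a Tamari interval. Set P = u P_1^ℓ d P_1^r P_2 and Q = u Q_1 d Q_2 (concatenation of words, u an up step, d a down step). Then I = [P,Q] is a Tamari interval, and the map (I_1, I_2) ↦ I is a bijection between pairs consisting of a pointed Tamari interval and a Tamari interval, and Tamari intervals of positive size. Moreover, I_1 is proper (its distinguished contact is not the initial vertex) if and only if the first ascent of P has height larger than 1. -/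

import Mathlib

/-- A step of a lattice path: north or east. -/
inductive Step : Type
  | N : Step
  | E : Step
deriving DecidableEq

/-- Number of north steps of a path. -/
def northCount (w : List Step) : ℕ := (w.filter (fun s => s = Step.N)).length

/-- Number of east steps of a path. -/
def eastCount (w : List Step) : ℕ := (w.filter (fun s => s = Step.E)).length

/-- `w` is an `m`-ballot path: it never goes below the line `x = m y`, and ends on it. -/
def IsBallot (m : ℕ) (w : List Step) : Prop :=
  (∀ k, eastCount (w.take k) ≤ m * northCount (w.take k)) ∧
    eastCount w = m * northCount w

/-- The covering relation of the `m`-Tamari order: `Q` covers `P` when `P` contains an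
east step immediately followed by a north step `b`, and `Q` is obtained from `P` by
swapping the east step and `S`, where `S` is the shortest factor of `P` beginning with
`b` that is a (translated) `m`-ballot path. -/
def TamariCovers (m : ℕ) (P Q : List Step) : Prop :=
  ∃ w₁ S w₂ : List Step,
    S ≠ [] ∧ S.head? = some Step.N ∧ IsBallot m S ∧
    (∀ k, 0 < k → k < S.length → ¬ IsBallot m (S.take k)) ∧
    P = w₁ ++ Step.E :: (S ++ w₂) ∧ Q = w₁ ++ S ++ Step.E :: w₂

/-- The `m`-Tamari order (reflexive–transitive closure of the covering relation). -/
def TamariLE (m : ℕ) : List Step → List Step → Prop :=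
  Relation.ReflTransGen (TamariCovers m)

/-- A Dyck path, written with `N` for up steps and `E` for down steps: every prefix has
at least as many up steps as down steps, and the whole word is balanced.  (This is the
`m = 1` ballot condition.) -/
def IsDyck (w : List Step) : Prop := IsBallot 1 w

/-- A Tamari interval: a pair of Dyck paths `P ≤ Q` in the Tamari order. -/
def IsTamariInterval (P Q : List Step) : Prop :=
  IsDyck P ∧ IsDyck Q ∧ TamariLE 1 P Q

/-- A pointed Tamari interval `[P₁ℓ P₁r, Q₁]`: the lower path carries a distinguished
contact splitting it into the Dyck paths `P₁ℓ` and `P₁r`. -/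
def IsPointedTamariInterval (Pl Pr Q : List Step) : Prop :=
  IsDyck Pl ∧ IsDyck Pr ∧ IsTamariInterval (Pl ++ Pr) Q

/-- The lower path `u P₁ℓ d P₁r P₂` of the recursive construction. -/
def glueLower (Pl Pr P₂ : List Step) : List Step :=
  Step.N :: (Pl ++ Step.E :: (Pr ++ P₂))

/-- The upper path `u Q₁ d Q₂` of the recursive construction. -/
def glueUpper (Q₁ Q₂ : List Step) : List Step :=
  Step.N :: (Q₁ ++ Step.E :: Q₂)

/-- The height of the first ascent of a path (length of its initial run of up steps). -/
def firstAscentHeight (w : List Step) : ℕ :=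
  (w.takeWhile (fun s => decide (s = Step.N))).length

/-!
The upper path of a Tamari interval of positive size factors at its first return as
`u Q₁ d Q₂`. A Tamari cover ending at `u P₁ℓ d P₁r P₂` (with `P₁ℓ`, `P₁r`, `P₂` Dyck) either
takes place inside one of the three factors, or moves the marked `d` to the left across the
last primitive factor `S` of `P₁ℓ = P' S`, giving `u P' d (S P₁r) P₂`; a cover can never
straddle a contact. Walking down from `u Q₁ d Q₂` therefore only meets paths
`u P₁ℓ d P₁r P₂` with `P₁ℓ P₁r ≤ Q₁` and `P₂ ≤ Q₂`. Conversely `d R ≤ R d` for every Dyck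
path `R` (move `d` across the primitive factors of `R` one at a time), whence
`u P₁ℓ d P₁r P₂ ≤ u P₁ℓ d P₁r Q₂ ≤ u P₁ℓ P₁r d Q₂ ≤ u Q₁ d Q₂`. The decomposition is unique
because in `A d B` with `A` Dyck, the `d` is the first step below the axis.
-/

open Step

theorem List.prefix_append_iff {α : Type*} {p l₁ l₂ : List α} :
    p <+: l₁ ++ l₂ ↔ p <+: l₁ ∨ ∃ r, p = l₁ ++ r ∧ r <+: l₂ := by
  constructor
  · rintro ⟨t, h⟩
    rcases List.append_eq_append_iff.mp h with ⟨a, rfl, -⟩ | ⟨c, rfl, hc⟩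
    · exact Or.inl (List.prefix_append _ _)
    · exact Or.inr ⟨c, rfl, t, hc.symm⟩
  · rintro (h | ⟨r, rfl, hr⟩)
    · exact h.trans (List.prefix_append _ _)
    · exact (List.prefix_append_right_inj _).mpr hr

def height (w : List Step) : ℤ := northCount w - eastCount w

@[simp] theorem height_nil : height [] = 0 := rfl

@[simp] theorem height_append (a b : List Step) : height (a ++ b) = height a + height b := by
  simp only [height, northCount, eastCount, List.filter_append, List.length_append, Nat.cast_add]
  ring

@[simp] theorem height_cons_N (w : List Step) : height (N :: w) = height w + 1 := by
  rw [← List.singleton_append, height_append, add_comm]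
  rfl

@[simp] theorem height_cons_E (w : List Step) : height (E :: w) = height w - 1 := by
  rw [← List.singleton_append, height_append, add_comm]
  rfl

theorem isDyck_iff {w : List Step} :
    IsDyck w ↔ (∀ p, p <+: w → 0 ≤ height p) ∧ height w = 0 := by
  have nonneg_iff (v : List Step) : 0 ≤ height v ↔ eastCount v ≤ 1 * northCount v := by
    simp [height]
  have eq_zero_iff : height w = 0 ↔ eastCount w = 1 * northCount w := by
    simp only [height, one_mul]
    omega
  simp only [IsDyck, IsBallot, nonneg_iff, eq_zero_iff]
  refine and_congr_left' ⟨fun h p hp => ?_, fun h k => h _ (List.take_prefix k w)⟩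
  rw [List.prefix_iff_eq_take.mp hp]
  exact h _

namespace IsDyck

variable {w : List Step}

theorem height_eq_zero (h : IsDyck w) : height w = 0 := (isDyck_iff.mp h).2

theorem height_nonneg (h : IsDyck w) {p : List Step} (hp : p <+: w) : 0 ≤ height p :=
  (isDyck_iff.mp h).1 p hp

theorem append {v : List Step} (hw : IsDyck w) (hv : IsDyck v) : IsDyck (w ++ v) := by
  refine isDyck_iff.mpr ⟨fun p hp => ?_, by simp [hw.height_eq_zero, hv.height_eq_zero]⟩
  rcases List.prefix_append_iff.mp hp with hp | ⟨r, rfl, hr⟩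
  · exact hw.height_nonneg hp
  · simpa [hw.height_eq_zero] using hv.height_nonneg hr

theorem of_append_left {v : List Step} (h : IsDyck (w ++ v)) (hv : height v = 0) : IsDyck w :=
  isDyck_iff.mpr ⟨fun _ hp => h.height_nonneg (hp.trans (List.prefix_append w v)),
    by simpa [hv] using h.height_eq_zero⟩

theorem of_prefix {p : List Step} (hw : IsDyck w) (hp : p <+: w) (h0 : height p = 0) :
    IsDyck p :=
  isDyck_iff.mpr ⟨fun _ hq => hw.height_nonneg (hq.trans hp), h0⟩

end IsDyck

theorem isDyck_nil : IsDyck [] := isDyck_iff.mpr ⟨fun p hp => by simp [List.prefix_nil.mp hp], rfl⟩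

theorem not_isDyck_append_E_cons {A t : List Step} (hA : height A = 0) :
    ¬ IsDyck (A ++ E :: t) := fun h => by
  simpa [hA] using h.height_nonneg (p := A ++ [E]) ⟨t, by simp⟩

theorem IsDyck.exists_eq_N_cons {w : List Step} (h : IsDyck w) (hne : w ≠ []) :
    ∃ t, w = N :: t := by
  match w, h with
  | N :: t, _ => exact ⟨t, rfl⟩
  | E :: _, h => exact absurd h (not_isDyck_append_E_cons (A := []) rfl)

theorem isDyck_glue {A B : List Step} (hA : IsDyck A) (hB : IsDyck B) :
    IsDyck (N :: (A ++ E :: B)) := by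
  refine isDyck_iff.mpr ⟨fun p hp => ?_, by simp [hA.height_eq_zero, hB.height_eq_zero]⟩
  rcases List.prefix_cons_iff.mp hp with rfl | ⟨q, rfl, hq⟩
  · simp
  rcases List.prefix_append_iff.mp hq with hqA | ⟨r, rfl, hr⟩
  · simpa using (hA.height_nonneg hqA).trans (Int.le_add_one le_rfl)
  rcases List.prefix_cons_iff.mp hr with rfl | ⟨r', rfl, hr'⟩
  · simp [hA.height_eq_zero]
  · simpa [hA.height_eq_zero] using hB.height_nonneg hr'

theorem IsDyck.exists_eq_glue {w : List Step} (hw : IsDyck w) (hne : w ≠ []) :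
    ∃ A B, IsDyck A ∧ IsDyck B ∧ w = N :: (A ++ E :: B) := by
  obtain ⟨T, rfl⟩ := hw.exists_eq_N_cons hne
  -- the first return of `N :: T` is the first step of `T` that goes below the axis
  have hex : ∃ k, height (T.take (k + 1)) < 0 := by
    refine ⟨T.length, ?_⟩
    have := hw.height_eq_zero
    rw [height_cons_N] at this
    rw [List.take_of_length_le (by omega)]
    omega
  obtain ⟨k, hk, hmin⟩ : ∃ k, height (T.take (k + 1)) < 0 ∧
      ∀ j < k, ¬ height (T.take (j + 1)) < 0 :=
    ⟨Nat.find hex, Nat.find_spec hex, fun _ => Nat.find_min hex⟩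
  have hprefix : ∀ j ≤ k, 0 ≤ height (T.take j) := by
    rintro (_ | j) hj
    · simp
    · exact not_lt.mp (hmin j (by omega))
  have hlt : k < T.length := by
    by_contra hle
    have hk' := hprefix k le_rfl
    rw [List.take_of_length_le (show T.length ≤ k + 1 by omega)] at hk
    rw [List.take_of_length_le (show T.length ≤ k by omega)] at hk'
    omega
  have hT : T = T.take k ++ T[k] :: T.drop (k + 1) := by
    rw [← List.drop_eq_getElem_cons hlt, List.take_append_drop]
  rw [List.take_succ_eq_append_getElem hlt] at hk
  obtain ⟨hE, hA⟩ : T[k] = E ∧ height (T.take k) = 0 := by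
    have := hprefix k le_rfl
    cases hs : T[k] <;>
      simp only [hs, height_append, height_cons_N, height_cons_E, height_nil] at hk
    exacts [absurd hk (by omega), ⟨rfl, by omega⟩]
  refine ⟨T.take k, T.drop (k + 1), isDyck_iff.mpr ⟨fun p hp => ?_, hA⟩, ?_, by rw [← hE, ← hT]⟩
  · rw [List.prefix_iff_eq_take.mp (hp.trans (List.take_prefix k T))]
    exact hprefix _ (hp.length_le.trans (List.length_take_le k T))
  · rw [hT, hE] at hw
    generalize T.take k = A, T.drop (k + 1) = B at hw hA
    refine isDyck_iff.mpr ⟨fun r hr => ?_, by simpa [hA] using hw.height_eq_zero⟩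
    simpa [hA] using hw.height_nonneg (p := N :: (A ++ E :: r)) (by simpa using hr)

section Tamari

variable {m : ℕ}

theorem TamariCovers.length_eq {P Q : List Step} (h : TamariCovers m P Q) :
    P.length = Q.length := by
  obtain ⟨w₁, S, w₂, -, -, -, -, rfl, rfl⟩ := h
  simp only [List.length_append, List.length_cons]
  omega

theorem TamariLE.length_eq {P Q : List Step} (h : TamariLE m P Q) : P.length = Q.length := by
  induction h with
  | refl => rfl
  | tail _ hc ih => exact ih.trans hc.length_eq

theorem TamariCovers.context {P Q : List Step} (h : TamariCovers m P Q) (a b : List Step) :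
    TamariCovers m (a ++ P ++ b) (a ++ Q ++ b) := by
  obtain ⟨w₁, S, w₂, hne, hhd, hS, hmin, rfl, rfl⟩ := h
  exact ⟨a ++ w₁, S, w₂ ++ b, hne, hhd, hS, hmin, by simp, by simp⟩

theorem TamariLE.context {P Q : List Step} (h : TamariLE m P Q) (a b : List Step) :
    TamariLE m (a ++ P ++ b) (a ++ Q ++ b) :=
  h.lift (fun w => a ++ w ++ b) fun _ _ hc => hc.context a b

theorem TamariCovers.cons_cases {a c : List Step} {s : Step} (h : TamariCovers m a (s :: c)) :
    (∃ a', a = s :: a' ∧ TamariCovers m a' c) ∨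
      ∃ S w₂, IsBallot m S ∧ S.head? = some N ∧ s :: c = S ++ E :: w₂ := by
  obtain ⟨_ | ⟨x, w₁⟩, S, w₂, hne, hhd, hS, hmin, rfl, hc⟩ := h
  · exact Or.inr ⟨S, w₂, hS, hhd, by simpa using hc⟩
  · obtain ⟨rfl, rfl⟩ := List.cons_eq_cons.mp hc
    exact Or.inl ⟨_, rfl, w₁, S, w₂, hne, hhd, hS, hmin, rfl, rfl⟩

end Tamari

theorem tamariCovers_E_cons_N_append_E {A : List Step} (hA : IsDyck A) (w : List Step) :
    TamariCovers 1 (E :: (N :: (A ++ [E]) ++ w)) (N :: (A ++ [E]) ++ E :: w) := by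
  refine ⟨[], N :: (A ++ [E]), w, List.cons_ne_nil _ _, rfl, isDyck_glue hA isDyck_nil, ?_,
    rfl, rfl⟩
  rintro (_ | j) hj hjlen hD
  · omega
  have hjA : j ≤ A.length := by
    simp only [List.length_cons, List.length_append, List.length_nil] at hjlen
    omega
  have h0 := IsDyck.height_eq_zero hD
  rw [List.take_succ_cons, List.take_append_of_le_length hjA, height_cons_N] at h0
  have := hA.height_nonneg (List.take_prefix j A)
  omega

theorem tamariLE_E_cons {R : List Step} (hR : IsDyck R) : TamariLE 1 (E :: R) (R ++ [E]) := by
  induction hn : R.length using Nat.strong_induction_on generalizing R with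
  | _ n ih =>
  rcases eq_or_ne R [] with rfl | hne
  · exact .refl
  obtain ⟨A, B, hA, hB, rfl⟩ := hR.exists_eq_glue hne
  have hB_lt : B.length < n := by
    simp only [← hn, List.length_cons, List.length_append]
    omega
  have hjump := (ih B.length hB_lt hB rfl).context (N :: (A ++ [E])) []
  have hcov := tamariCovers_E_cons_N_append_E hA B
  simp only [List.cons_append, List.append_assoc, List.append_nil] at hcov hjump ⊢
  exact .head hcov hjump

theorem IsPointedTamariInterval.glue {Pl Pr Q₁ P₂ Q₂ : List Step}
    (h₁ : IsPointedTamariInterval Pl Pr Q₁) (h₂ : IsTamariInterval P₂ Q₂) :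
    IsTamariInterval (glueLower Pl Pr P₂) (glueUpper Q₁ Q₂) := by
  obtain ⟨hPl, hPr, -, hQ₁, hle₁⟩ := h₁
  obtain ⟨hP₂, hQ₂, hle₂⟩ := h₂
  refine ⟨isDyck_glue hPl (hPr.append hP₂), isDyck_glue hQ₁ hQ₂, ?_⟩
  have hP₂Q₂ := hle₂.context (N :: (Pl ++ E :: Pr)) []
  have hjump := (tamariLE_E_cons hPr).context (N :: Pl) Q₂
  have hQ₁ := hle₁.context [N] (E :: Q₂)
  simp only [List.append_nil, List.cons_append, List.append_assoc, List.nil_append]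
    at hP₂Q₂ hjump hQ₁
  exact hP₂Q₂.trans (hjump.trans hQ₁)

theorem IsDyck.of_tamariCovers {P Q : List Step} (hQ : IsDyck Q) (h : TamariCovers 1 P Q) :
    IsDyck P := by
  obtain ⟨w₁, S, w₂, -, -, hS, -, rfl, rfl⟩ := h
  have hS0 : height S = 0 := IsDyck.height_eq_zero hS
  have hw₁ : 1 ≤ height w₁ := by
    simpa [hS0] using hQ.height_nonneg (p := w₁ ++ S ++ [E]) ⟨w₂, by simp⟩
  refine isDyck_iff.mpr ⟨fun p hp => ?_, by simpa [hS0] using hQ.height_eq_zero⟩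
  rcases List.prefix_append_iff.mp hp with hpw | ⟨r, rfl, hr⟩
  · exact hQ.height_nonneg (hpw.trans (by simp [List.append_assoc]))
  rcases List.prefix_cons_iff.mp hr with rfl | ⟨r', rfl, hr'⟩
  · simp only [List.append_nil]
    omega
  rcases List.prefix_append_iff.mp hr' with hrS | ⟨r'', rfl, hr''⟩
  · have := IsDyck.height_nonneg hS hrS
    simp only [height_append, height_cons_E]
    omega
  · simpa [hS0] using hQ.height_nonneg (p := w₁ ++ S ++ E :: r'') (by simpa using hr'')

theorem not_isDyck_of_minimal {S s t : List Step}
    (hmin : ∀ k, 0 < k → k < S.length → ¬ IsBallot 1 (S.take k)) (hS : S = s ++ t)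
    (hs : s ≠ []) (ht : t ≠ []) : ¬ IsDyck s := by
  have hst : S.take s.length = s := by simp [hS]
  rw [← hst]
  refine hmin _ (List.length_pos_iff.mpr hs) ?_
  simpa [hS] using List.length_pos_iff.mpr ht

theorem TamariCovers.cases_append {a X Y : List Step} (hX : IsDyck X)
    (h : TamariCovers 1 a (X ++ Y)) :
    (∃ X', TamariCovers 1 X' X ∧ a = X' ++ Y) ∨ (∃ Y', TamariCovers 1 Y' Y ∧ a = X ++ Y') ∨
      ∃ w S w₂, IsDyck S ∧ X = w ++ S ∧ Y = E :: w₂ ∧ a = w ++ E :: (S ++ w₂) := by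
  obtain ⟨w₁, S, w₂, hne, hhd, hS, hmin, rfl, hc⟩ := h
  rw [List.append_assoc] at hc
  rcases List.append_eq_append_iff.mp hc with ⟨t, rfl, hY⟩ | ⟨t, rfl, ht⟩
  · exact Or.inr <| Or.inl ⟨t ++ E :: (S ++ w₂), ⟨t, S, w₂, hne, hhd, hS, hmin, rfl, by simp [hY]⟩,
      by simp⟩
  rcases List.append_eq_append_iff.mp ht with ⟨u, rfl, hu⟩ | ⟨u, hSu, rfl⟩
  · rcases u with _ | ⟨s, u⟩
    · exact Or.inr <| Or.inr ⟨w₁, S, w₂, hS, by simp, by simpa using hu.symm, rfl⟩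
    obtain ⟨rfl, rfl⟩ := List.cons_eq_cons.mp hu
    exact Or.inl ⟨w₁ ++ E :: (S ++ u), ⟨w₁, S, u, hne, hhd, hS, hmin, rfl, by simp⟩, by simp⟩
  rcases eq_or_ne u [] with rfl | hu
  · exact Or.inr <| Or.inr ⟨w₁, S, w₂, hS, by simp [hSu], rfl, rfl⟩
  rcases eq_or_ne t [] with rfl | htne
  · refine Or.inr <| Or.inl ⟨E :: (S ++ w₂), ⟨[], S, w₂, hne, hhd, hS, hmin, rfl, ?_⟩, by simp⟩
    simp [hSu]
  -- otherwise `t` would be a nonempty proper Dyck prefix of the primitive factor `S`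
  have hS : IsDyck S := hS
  have hw₁ := hX.height_nonneg (List.prefix_append w₁ t)
  have ht := hS.height_nonneg (p := t) ⟨u, hSu.symm⟩
  have hX0 := hX.height_eq_zero
  rw [height_append] at hX0
  exact absurd (hS.of_prefix ⟨u, hSu.symm⟩ (by omega)) (not_isDyck_of_minimal hmin hSu htne hu)

theorem TamariCovers.exists_of_glueLower {a Pl Pr P₂ : List Step} (hPl : IsDyck Pl)
    (hPr : IsDyck Pr) (hP₂ : IsDyck P₂) (h : TamariCovers 1 a (glueLower Pl Pr P₂)) :
    ∃ Pl' Pr' P₂', IsDyck Pl' ∧ IsDyck Pr' ∧ IsDyck P₂' ∧ TamariLE 1 (Pl' ++ Pr') (Pl ++ Pr) ∧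
      TamariLE 1 P₂' P₂ ∧ a = glueLower Pl' Pr' P₂' := by
  obtain ⟨a, rfl, ha⟩ : ∃ a', a = N :: a' ∧ TamariCovers 1 a' (Pl ++ E :: (Pr ++ P₂)) := by
    refine h.cons_cases.resolve_right ?_
    rintro ⟨S, w₂, hS, -, hc⟩
    exact not_isDyck_append_E_cons (IsDyck.height_eq_zero hS)
      (hc ▸ isDyck_glue hPl (hPr.append hP₂))
  rcases ha.cases_append hPl with ⟨Pl', h', rfl⟩ | ⟨Y, h', rfl⟩ | ⟨w, S, w₂, hS, rfl, hY, rfl⟩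
  · exact ⟨Pl', Pr, P₂, hPl.of_tamariCovers h', hPr, hP₂,
      .single (by simpa using h'.context [] Pr), .refl, rfl⟩
  · obtain ⟨Y, rfl, hY⟩ := h'.cons_cases.resolve_right <| by
      rintro ⟨_ | ⟨s, S⟩, w₂, -, hhd, hc⟩ <;> simp_all
    rcases hY.cases_append hPr with ⟨Pr', h'', rfl⟩ | ⟨P₂', h'', rfl⟩ | ⟨-, -, w₂, -, -, rfl, -⟩
    · exact ⟨Pl, Pr', P₂, hPl, hPr.of_tamariCovers h'', hP₂,
        .single (by simpa using h''.context Pl []), .refl, rfl⟩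
    · exact ⟨Pl, Pr, P₂', hPl, hPr, hP₂.of_tamariCovers h'', .refl, .single h'', rfl⟩
    · exact absurd hP₂ (not_isDyck_append_E_cons (A := []) rfl)
  · obtain rfl : w₂ = Pr ++ P₂ := (List.cons_eq_cons.mp hY).2.symm
    exact ⟨w, S ++ Pr, P₂, hPl.of_append_left hS.height_eq_zero, hS.append hPr, hP₂,
      by rw [List.append_assoc]; exact .refl, .refl, by simp [glueLower]⟩

theorem exists_glueLower_of_tamariLE_glueUpper {P Q₁ Q₂ : List Step} (hQ₁ : IsDyck Q₁)
    (hQ₂ : IsDyck Q₂) (h : TamariLE 1 P (glueUpper Q₁ Q₂)) :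
    ∃ Pl Pr P₂, IsPointedTamariInterval Pl Pr Q₁ ∧ IsTamariInterval P₂ Q₂ ∧
      P = glueLower Pl Pr P₂ := by
  induction h using Relation.ReflTransGen.head_induction_on with
  | refl =>
    exact ⟨Q₁, [], Q₂, ⟨hQ₁, isDyck_nil, by simpa using ⟨hQ₁, hQ₁, .refl⟩⟩, ⟨hQ₂, hQ₂, .refl⟩,
      rfl⟩
  | head hc _ ih =>
    obtain ⟨Pl, Pr, P₂, ⟨hPl, hPr, -, -, hle₁⟩, ⟨hP₂, -, hle₂⟩, rfl⟩ := ih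
    obtain ⟨Pl', Pr', P₂', hPl', hPr', hP₂', h₁, h₂, rfl⟩ := hc.exists_of_glueLower hPl hPr hP₂
    exact ⟨Pl', Pr', P₂', ⟨hPl', hPr', hPl'.append hPr', hQ₁, h₁.trans hle₁⟩,
      ⟨hP₂', hQ₂, h₂.trans hle₂⟩, rfl⟩

theorem IsDyck.append_E_cons_inj {A A' B B' : List Step} (hA : IsDyck A) (hA' : IsDyck A')
    (h : A ++ E :: B = A' ++ E :: B') : A = A' ∧ B = B' := by
  suffices hlen : A.length = A'.length by
    obtain ⟨rfl, hB⟩ := List.append_inj h hlen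
    exact ⟨rfl, (List.cons_eq_cons.mp hB).2⟩
  rcases List.append_eq_append_iff.mp h with ⟨t, rfl, ht⟩ | ⟨t, rfl, ht⟩
  · rcases t with _ | ⟨s, t⟩
    · simp
    obtain ⟨rfl, -⟩ := List.cons_eq_cons.mp ht
    exact absurd hA' (not_isDyck_append_E_cons hA.height_eq_zero)
  · rcases t with _ | ⟨s, t⟩
    · simp
    obtain ⟨rfl, -⟩ := List.cons_eq_cons.mp ht
    exact absurd hA (not_isDyck_append_E_cons hA'.height_eq_zero)

theorem IsPointedTamariInterval.glue_inj {Pl Pr Q₁ P₂ Q₂ Pl' Pr' Q₁' P₂' Q₂' : List Step}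
    (h₁ : IsPointedTamariInterval Pl Pr Q₁) (h₂ : IsTamariInterval P₂ Q₂)
    (h₁' : IsPointedTamariInterval Pl' Pr' Q₁') (h₂' : IsTamariInterval P₂' Q₂')
    (hP : glueLower Pl Pr P₂ = glueLower Pl' Pr' P₂') (hQ : glueUpper Q₁ Q₂ = glueUpper Q₁' Q₂') :
    Pl = Pl' ∧ Pr = Pr' ∧ Q₁ = Q₁' ∧ P₂ = P₂' ∧ Q₂ = Q₂' := by
  obtain ⟨rfl, rfl⟩ := h₁.2.2.2.1.append_E_cons_inj h₁'.2.2.2.1 (List.cons_eq_cons.mp hQ).2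
  obtain ⟨rfl, hPrP₂⟩ := h₁.1.append_E_cons_inj h₁'.1 (List.cons_eq_cons.mp hP).2
  obtain ⟨rfl, rfl⟩ := List.append_inj' hPrP₂ (h₂.2.2.length_eq.trans h₂'.2.2.length_eq.symm)
  exact ⟨rfl, rfl, rfl, rfl, rfl⟩

theorem one_lt_firstAscentHeight_glueLower_iff {Pl : List Step} (hPl : IsDyck Pl)
    (Pr P₂ : List Step) : 1 < firstAscentHeight (glueLower Pl Pr P₂) ↔ Pl ≠ [] := by
  rcases eq_or_ne Pl [] with rfl | hne
  · simp [glueLower, firstAscentHeight]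
  · obtain ⟨t, rfl⟩ := hPl.exists_eq_N_cons hne
    simp [glueLower, firstAscentHeight]

/-- **Recursive decomposition of Tamari intervals.**  Given a pointed Tamari interval
`I₁ = [P₁ℓ P₁r, Q₁]` and a Tamari interval `I₂ = [P₂, Q₂]`, the pair
`I = [u P₁ℓ d P₁r P₂, u Q₁ d Q₂]` is a Tamari interval; the map `(I₁, I₂) ↦ I` is a
bijection onto Tamari intervals of positive size; and `I₁` is proper (i.e. `P₁ℓ ≠ ∅`)
if and only if the first ascent of the lower path of `I` has height larger than `1`. -/
theorem tamari_interval_decomposition :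
    (∀ Pl Pr Q₁ P₂ Q₂ : List Step,
        IsPointedTamariInterval Pl Pr Q₁ → IsTamariInterval P₂ Q₂ →
        IsTamariInterval (glueLower Pl Pr P₂) (glueUpper Q₁ Q₂)) ∧
      (∀ P Q : List Step, IsTamariInterval P Q → 0 < northCount P →
        ∃! x : (List Step × List Step × List Step) × (List Step × List Step),
          IsPointedTamariInterval x.1.1 x.1.2.1 x.1.2.2 ∧
            IsTamariInterval x.2.1 x.2.2 ∧
            glueLower x.1.1 x.1.2.1 x.2.1 = P ∧ glueUpper x.1.2.2 x.2.2 = Q) ∧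
      (∀ Pl Pr Q₁ P₂ Q₂ : List Step,
        IsPointedTamariInterval Pl Pr Q₁ → IsTamariInterval P₂ Q₂ →
        (Pl ≠ [] ↔ 1 < firstAscentHeight (glueLower Pl Pr P₂))) := by
  refine ⟨fun _ _ _ _ _ h₁ h₂ => h₁.glue h₂, ?_,
    fun _ Pr _ P₂ _ h₁ _ => (one_lt_firstAscentHeight_glueLower_iff h₁.1 Pr P₂).symm⟩
  rintro P Q ⟨-, hQ, hle⟩ hP
  have hQne : Q ≠ [] := by
    rintro rfl
    simp [List.eq_nil_of_length_eq_zero hle.length_eq, northCount] at hP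
  obtain ⟨Q₁, Q₂, hQ₁, hQ₂, rfl⟩ := hQ.exists_eq_glue hQne
  obtain ⟨Pl, Pr, P₂, h₁, h₂, rfl⟩ := exists_glueLower_of_tamariLE_glueUpper hQ₁ hQ₂ hle
  refine ⟨((Pl, Pr, Q₁), (P₂, Q₂)), ⟨h₁, h₂, rfl, rfl⟩, ?_⟩
  rintro ⟨⟨Pl', Pr', Q₁'⟩, P₂', Q₂'⟩ ⟨h₁', h₂', hP', hQ'⟩
  obtain ⟨rfl, rfl, rfl, rfl, rfl⟩ := h₁'.glue_inj h₂' h₁ h₂ hP' hQ'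
  rfl
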